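/- arXiv:2006.07464 — 2 statements merged into one kernel-verified Lean document; each statement's English description precedes it below -/
import Mathlib

section
/- Let K ≥ 1 and let X = {x_1, …, x_K} ⊂ ℝ be a set of K distinct real numbers, and identify each function f : X → ℝ with the vector (f(x_1), …, f(x_K)) ∈ ℝ^K. Let p_z be the uniform probability measure on the cube [0,1]^K ⊂ ℝ^K. For every ε > 0, every δ ∈ (0,1), every B > 0, and every Borel probability measure μ on ℝ^K satisfying μ({v ∈ ℝ^K : max_{1≤i≤K} |v_i| ≤ B}) = 1, there exist a Borel measurable map H : ℝ^K → ℝ^K whose pushforward of p_z equals μ, and a ReLU network N : ℝ^{1+K} → ℝ, such that p_z({z ∈ ℝ^K : max_{1≤i≤K} |N(x_i, z) − H(z)_i| ≤ ε}) ≥ 1 − δ. -/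
/-!
The uniform measure on `[0,1]` is pushed onto any Borel probability measure on the standard Borel
space `ℝ^K` by some measurable `f`, so `H z := f (z i0)` is a transport map reading a single noise
coordinate. Being bounded, `f` is integrable, hence close in measure to a continuous function; on
`[0,1]` that function is a uniform limit of one-variable ReLU expressions, because these contain the
affine functions and are closed under `max a b = a + relu (b - a)` and `min`, so that the lattice
Stone–Weierstrass theorem applies. Finally, hat functions of the input `x` that equal `1` at `x i`
and vanish at the other nodes gate the `i`-th approximant.
-/

open MeasureTheory

/-- The ReLU activation. -/
noncomputable def relu (t : ℝ) : ℝ := max t 0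

/-- `IsReLUNet N` says that `N : ℝ^n → ℝ^m` is expressible as
`A_L ∘ ρ ∘ A_{L-1} ∘ ⋯ ∘ ρ ∘ A_1` for some `L ≥ 1`, where each `A_i` is an affine map
and `ρ` applies `t ↦ max (t, 0)` coordinatewise. -/
inductive IsReLUNet : {n m : ℕ} → ((Fin n → ℝ) → (Fin m → ℝ)) → Prop
  | affine {n m : ℕ} (A : Matrix (Fin m) (Fin n) ℝ) (b : Fin m → ℝ) :
      IsReLUNet (fun x => A.mulVec x + b)
  | step {n k m : ℕ} (A : Matrix (Fin m) (Fin k) ℝ) (b : Fin m → ℝ)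
      {f : (Fin n → ℝ) → (Fin k → ℝ)} :
      IsReLUNet f → IsReLUNet (fun x => A.mulVec (fun i => relu (f x i)) + b)

open Set Filter unitInterval
open scoped ENNReal Topology BoundedContinuousFunction

lemma relu_of_nonneg {t : ℝ} (h : 0 ≤ t) : relu t = t := max_eq_left h

lemma relu_of_nonpos {t : ℝ} (h : t ≤ 0) : relu t = 0 := max_eq_right h

lemma relu_sub_relu_neg (t : ℝ) : relu t - relu (-t) = t := by
  rcases le_total t 0 with h | h
  · rw [relu_of_nonpos h, relu_of_nonneg (neg_nonneg.2 h)]; ring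
  · rw [relu_of_nonneg h, relu_of_nonpos (neg_nonpos.2 h)]; ring

lemma relu_add_relu_neg (t : ℝ) : relu t + relu (-t) = |t| := by
  rcases le_total t 0 with h | h
  · rw [relu_of_nonpos h, relu_of_nonneg (neg_nonneg.2 h), abs_of_nonpos h, zero_add]
  · rw [relu_of_nonneg h, relu_of_nonpos (neg_nonpos.2 h), abs_of_nonneg h, add_zero]

lemma min_eq_sub_relu_sub (a b : ℝ) : min a b = a - relu (a - b) := by
  rcases le_total a b with h | h
  · rw [min_eq_left h, relu_of_nonpos (sub_nonpos.2 h), sub_zero]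
  · rw [min_eq_right h, relu_of_nonneg (sub_nonneg.2 h)]; ring

lemma max_eq_add_relu_sub (a b : ℝ) : max a b = a + relu (b - a) := by
  rcases le_total a b with h | h
  · rw [max_eq_right h, relu_of_nonneg (sub_nonneg.2 h)]; ring
  · rw [max_eq_left h, relu_of_nonpos (sub_nonpos.2 h), add_zero]

section ReLUSpan

variable {α β : Type*}

/-- `reluSpan B L` consists of the outputs of ReLU networks with `L` hidden layers whose
first-layer pre-activations lie in `B`. -/
def reluSpan (B : Submodule ℝ (α → ℝ)) : ℕ → Submodule ℝ (α → ℝ)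
  | 0 => B
  | L + 1 => Submodule.span ℝ ((fun (g : α → ℝ) x => relu (g x)) '' reluSpan B L)

variable {B : Submodule ℝ (α → ℝ)}

lemma relu_comp_mem_reluSpan {L : ℕ} {g : α → ℝ} (hg : g ∈ reluSpan B L) :
    (fun x => relu (g x)) ∈ reluSpan B (L + 1) :=
  Submodule.subset_span ⟨g, hg, rfl⟩

lemma reluSpan_le_succ (B : Submodule ℝ (α → ℝ)) (L : ℕ) : reluSpan B L ≤ reluSpan B (L + 1) := by
  intro g hg
  have hsplit : g = (fun x => relu (g x)) - fun x => relu ((-g) x) :=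
    funext fun x => (relu_sub_relu_neg (g x)).symm
  rw [hsplit]
  exact sub_mem (relu_comp_mem_reluSpan hg) (relu_comp_mem_reluSpan (neg_mem hg))

lemma monotone_reluSpan (B : Submodule ℝ (α → ℝ)) : Monotone (reluSpan B) :=
  monotone_nat_of_le_succ (reluSpan_le_succ B)

lemma reluSpan_map_funLeft_le {B' : Submodule ℝ (β → ℝ)} (φ : α → β)
    (hB : B'.map (LinearMap.funLeft ℝ ℝ φ) ≤ B) :
    ∀ L, (reluSpan B' L).map (LinearMap.funLeft ℝ ℝ φ) ≤ reluSpan B L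
  | 0 => hB
  | L + 1 => by
    rw [reluSpan, Submodule.map_span, Submodule.span_le]
    rintro _ ⟨_, ⟨g, hg, rfl⟩, rfl⟩
    exact relu_comp_mem_reluSpan (reluSpan_map_funLeft_le φ hB L ⟨g, hg, rfl⟩)

def reluClosure (B : Submodule ℝ (α → ℝ)) : Submodule ℝ (α → ℝ) := ⨆ L, reluSpan B L

lemma mem_reluClosure {f : α → ℝ} : f ∈ reluClosure B ↔ ∃ L, f ∈ reluSpan B L :=
  Submodule.mem_iSup_of_directed _ (monotone_reluSpan B).directed_le

lemma le_reluClosure : B ≤ reluClosure B := le_iSup (reluSpan B) 0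

lemma relu_comp_mem_reluClosure {f : α → ℝ} (hf : f ∈ reluClosure B) :
    (fun x => relu (f x)) ∈ reluClosure B := by
  obtain ⟨L, hL⟩ := mem_reluClosure.1 hf
  exact mem_reluClosure.2 ⟨L + 1, relu_comp_mem_reluSpan hL⟩

lemma abs_comp_mem_reluClosure {f : α → ℝ} (hf : f ∈ reluClosure B) :
    (fun x => |f x|) ∈ reluClosure B := by
  have hsplit : (fun x => |f x|) = (fun x => relu (f x)) + fun x => relu ((-f) x) :=
    funext fun x => (relu_add_relu_neg (f x)).symm
  rw [hsplit]
  exact add_mem (relu_comp_mem_reluClosure hf) (relu_comp_mem_reluClosure (neg_mem hf))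

lemma comp_mem_reluClosure {B' : Submodule ℝ (β → ℝ)} (φ : α → β)
    (hB : B'.map (LinearMap.funLeft ℝ ℝ φ) ≤ B) {f : β → ℝ} (hf : f ∈ reluClosure B') :
    f ∘ φ ∈ reluClosure B := by
  obtain ⟨L, hL⟩ := mem_reluClosure.1 hf
  exact mem_reluClosure.2 ⟨L, reluSpan_map_funLeft_le φ hB L ⟨f, hL, rfl⟩⟩

end ReLUSpan

section AffineFns

variable (E : Type*) [AddCommGroup E] [Module ℝ E]

def affineFns : Submodule ℝ (E → ℝ) where
  carrier := range fun g : E →ᵃ[ℝ] ℝ => ⇑g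
  add_mem' := by
    rintro _ _ ⟨g, rfl⟩ ⟨g', rfl⟩
    exact ⟨g + g', rfl⟩
  zero_mem' := ⟨0, rfl⟩
  smul_mem' := by
    rintro c _ ⟨g, rfl⟩
    exact ⟨c • g, rfl⟩

variable {E} {F : Type*} [AddCommGroup F] [Module ℝ F]

lemma AffineMap.coe_mem_affineFns (g : E →ᵃ[ℝ] ℝ) : ⇑g ∈ affineFns E := ⟨g, rfl⟩

lemma map_funLeft_affineFns_le (g : E →ᵃ[ℝ] F) :
    (affineFns F).map (LinearMap.funLeft ℝ ℝ g) ≤ affineFns E := by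
  rintro _ ⟨_, ⟨q, rfl⟩, rfl⟩
  exact (q.comp g).coe_mem_affineFns

lemma AffineMap.comp_mem_reluClosure (g : E →ᵃ[ℝ] F) {f : F → ℝ}
    (hf : f ∈ reluClosure (affineFns F)) : f ∘ g ∈ reluClosure (affineFns E) :=
  _root_.comp_mem_reluClosure g (map_funLeft_affineFns_le g) hf

lemma comp_apply_mem_reluClosure {ι : Type*} {f : ℝ → ℝ} (hf : f ∈ reluClosure (affineFns ℝ))
    (i : ι) : (fun u : ι → ℝ => f (u i)) ∈ reluClosure (affineFns (ι → ℝ)) :=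
  (LinearMap.proj (R := ℝ) (φ := fun _ => ℝ) i).toAffineMap.comp_mem_reluClosure hf

lemma const_mem_reluClosure_affineFns (c : ℝ) : (fun _ => c) ∈ reluClosure (affineFns E) :=
  le_reluClosure (AffineMap.const ℝ E c).coe_mem_affineFns

lemma mul_add_mem_affineFns (a b : ℝ) : (fun t : ℝ => a * t + b) ∈ affineFns ℝ :=
  ⟨(a • LinearMap.id).toAffineMap + AffineMap.const ℝ ℝ b, rfl⟩

end AffineFns

section IsReLUNet

variable {n : ℕ}

lemma AffineMap.isReLUNet {m : ℕ} (g : (Fin n → ℝ) →ᵃ[ℝ] (Fin m → ℝ)) : IsReLUNet ⇑g := by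
  have hg : ⇑g = fun x => (LinearMap.toMatrix' g.linear).mulVec x + g 0 := by
    funext x
    rw [LinearMap.toMatrix'_mulVec]
    exact congrFun g.decomp x
  rw [hg]
  exact IsReLUNet.affine _ _

lemma isReLUNet_of_forall_mem_reluSpan :
    ∀ (L : ℕ) {m : ℕ} {N : (Fin n → ℝ) → (Fin m → ℝ)},
      (∀ r, (fun x => N x r) ∈ reluSpan (affineFns (Fin n → ℝ)) L) → IsReLUNet N
  | 0, m, N, hN => by
    choose g hg using hN
    convert (AffineMap.pi g).isReLUNet using 1
    funext x r
    exact (congrFun (hg r) x).symm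
  | L + 1, m, N, hN => by
    classical
    choose l hl hlN using fun r => (Finsupp.mem_span_image_iff_linearCombination ℝ).1 (hN r)
    -- one hidden neuron for every function used by some output coordinate
    set S := Finset.univ.biUnion fun r => (l r).support
    set e := S.equivFin.symm
    have hS : ∀ c, (e c : (Fin n → ℝ) → ℝ) ∈ reluSpan (affineFns (Fin n → ℝ)) L := fun c =>
      have ⟨r, _, hr⟩ := Finset.mem_biUnion.1 (e c).2
      hl r hr
    have hidden := isReLUNet_of_forall_mem_reluSpan L (N := fun x c => (e c : _ → ℝ) x) hS
    convert IsReLUNet.step (Matrix.of fun r c => l r (e c)) 0 hidden using 1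
    funext x r
    have hsupp : (l r).support ⊆ S :=
      Finset.subset_biUnion_of_mem (fun r => (l r).support) (Finset.mem_univ r)
    calc N x r = ∑ g ∈ S, l r g * relu (g x) := by
          rw [← congrFun (hlN r) x, Finsupp.linearCombination_apply,
            Finsupp.sum_of_support_subset _ hsupp _
              fun _ _ => zero_smul ℝ (A := (Fin n → ℝ) → ℝ) _]
          simp only [Finset.sum_apply, Pi.smul_apply, smul_eq_mul]
      _ = _ := by
          rw [← Finset.sum_coe_sort S, ← e.sum_comp]
          simp [Matrix.mulVec, dotProduct]

lemma isReLUNet_of_forall_mem_reluClosure {m : ℕ} {N : (Fin n → ℝ) → (Fin m → ℝ)}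
    (hN : ∀ r, (fun x => N x r) ∈ reluClosure (affineFns (Fin n → ℝ))) : IsReLUNet N := by
  have hlevel : ∀ᶠ L in atTop, ∀ r, (fun x => N x r) ∈ reluSpan (affineFns (Fin n → ℝ)) L := by
    refine eventually_all.2 fun r => ?_
    obtain ⟨L, hL⟩ := mem_reluClosure.1 (hN r)
    exact eventually_atTop.2 ⟨L, fun L' hL' => monotone_reluSpan _ hL' hL⟩
  obtain ⟨L, hL⟩ := hlevel.exists
  exact isReLUNet_of_forall_mem_reluSpan L hL

end IsReLUNet

theorem ContinuousMap.exists_mem_reluClosure_abs_sub_lt (c : C(I, ℝ)) {ε : ℝ} (hε : 0 < ε) :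
    ∃ p ∈ reluClosure (affineFns ℝ), ∀ s : I, |p s - c s| < ε := by
  set A : Set C(I, ℝ) := {F | ∃ p ∈ reluClosure (affineFns ℝ), ∀ s, F s = p s}
  have hA : closure A = ⊤ := by
    refine ContinuousMap.sublattice_closure_eq_top A ⟨0, 0, zero_mem _, fun _ => rfl⟩ ?_ ?_ ?_
    · rintro F ⟨p, hp, hFp⟩ G ⟨q, hq, hGq⟩
      refine ⟨p - fun t => relu ((p - q) t),
        sub_mem hp (relu_comp_mem_reluClosure (sub_mem hp hq)), fun s => ?_⟩
      simp [hFp, hGq, min_eq_sub_relu_sub]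
    · rintro F ⟨p, hp, hFp⟩ G ⟨q, hq, hGq⟩
      refine ⟨p + fun t => relu ((q - p) t),
        add_mem hp (relu_comp_mem_reluClosure (sub_mem hq hp)), fun s => ?_⟩
      simp [hFp, hGq, max_eq_add_relu_sub]
    · intro v x y
      set a : ℝ := (v y - v x) / (y - x)
      refine ⟨⟨fun s => a * s + (v x - a * x), by fun_prop⟩,
        ⟨_, le_reluClosure (mul_add_mem_affineFns a (v x - a * x)), fun _ => rfl⟩, by simp, ?_⟩
      rcases eq_or_ne x y with rfl | hxy
      · simp
      · have hyx : (y : ℝ) - x ≠ 0 := sub_ne_zero.2 (Subtype.coe_injective.ne hxy.symm)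
        simp only [ContinuousMap.coe_mk, a]
        field_simp
        ring
  obtain ⟨F, ⟨p, hp, hFp⟩, hcF⟩ := Metric.mem_closure_iff.1 (by simp [hA] : c ∈ closure A) ε hε
  refine ⟨p, hp, fun s => ?_⟩
  rw [← hFp, ← Real.dist_eq, dist_comm]
  exact (ContinuousMap.dist_apply_le_dist s).trans_lt hcF

theorem MeasureTheory.Integrable.exists_boundedContinuous_measure_le_dist_le
    {α E : Type*} [TopologicalSpace α] [NormalSpace α] [MeasurableSpace α] [BorelSpace α]
    [NormedAddCommGroup E] [NormedSpace ℝ E] {μ : Measure α} [μ.WeaklyRegular]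
    {f : α → E} (hf : Integrable f μ) {ε : ℝ} (hε : 0 < ε) {η : ℝ≥0∞} (hη : η ≠ 0) :
    ∃ g : α →ᵇ E, μ {x | ε ≤ dist (f x) (g x)} ≤ η := by
  have hε' : ENNReal.ofReal ε ≠ 0 := by simpa using hε
  obtain ⟨g, hfg, hg⟩ := hf.exists_boundedContinuous_lintegral_sub_le (ε := η * ENNReal.ofReal ε)
    (mul_ne_zero hη hε')
  refine ⟨g, ?_⟩
  have hmeas : AEMeasurable (fun x => ‖f x - g x‖ₑ) μ :=
    (hf.sub hg).aestronglyMeasurable.enorm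
  calc μ {x | ε ≤ dist (f x) (g x)} = μ {x | ENNReal.ofReal ε ≤ ‖f x - g x‖ₑ} := by
        simp_rw [← edist_eq_enorm_sub, edist_dist, ENNReal.ofReal_le_ofReal_iff dist_nonneg]
    _ ≤ (∫⁻ x, ‖f x - g x‖ₑ ∂μ) / ENNReal.ofReal ε :=
        meas_ge_le_lintegral_div hmeas hε' ENNReal.ofReal_ne_top
    _ ≤ η * ENNReal.ofReal ε / ENNReal.ofReal ε := by gcongr
    _ = η := ENNReal.mul_div_cancel_right hε' ENNReal.ofReal_ne_top

theorem MeasureTheory.Integrable.exists_reluClosure_measure_compl_le {K : ℕ}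
    {f : I → Fin K → ℝ} (hf : Integrable f) {ε : ℝ} (hε : 0 < ε) {η : ℝ≥0∞} (hη : η ≠ 0) :
    ∃ p : Fin K → ℝ → ℝ, (∀ i, p i ∈ reluClosure (affineFns ℝ)) ∧
      (∃ M, ∀ i (s : I), |p i s| ≤ M) ∧ volume {s : I | ∀ i, |p i s - f s i| < ε}ᶜ ≤ η := by
  obtain ⟨g, hg⟩ := hf.exists_boundedContinuous_measure_le_dist_le (half_pos hε) hη
  have happrox (i : Fin K) := ContinuousMap.exists_mem_reluClosure_abs_sub_lt
    ⟨fun s => g s i, by fun_prop⟩ (half_pos hε)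
  choose p hp hpg using happrox
  simp only [ContinuousMap.coe_mk] at hpg
  have hgi (i : Fin K) (s : I) : |g s i| ≤ ‖g‖ :=
    (norm_le_pi_norm (g s) i).trans (g.norm_coe_le_norm s)
  refine ⟨p, hp, ⟨ε / 2 + ‖g‖, fun i s => ?_⟩, ?_⟩
  · linarith [abs_sub_abs_le_abs_sub (p i s) (g s i), hpg i s, hgi i s]
  · refine le_trans (measure_mono fun s hs => ?_) hg
    by_contra hfg
    replace hfg : dist (f s) (g s) < ε / 2 := not_le.1 hfg
    refine (mem_compl_iff _ _).1 hs fun i => ?_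
    have hgf : |g s i - f s i| < ε / 2 := by
      rw [← Real.dist_eq, dist_comm]
      exact (dist_le_pi_dist (f s) (g s) i).trans_lt hfg
    linarith [abs_sub_le (p i s) (g s i) (f s i), hpg i s]

section Hypernet

noncomputable def bump (d a t : ℝ) : ℝ := relu (1 - |t - a| / d)

noncomputable def gate (M p s : ℝ) : ℝ := relu (p + M * (s - 1)) - relu (-p + M * (s - 1))

lemma bump_self (d a : ℝ) : bump d a a = 1 := by simp [bump, relu_of_nonneg]

lemma bump_eq_zero {d a t : ℝ} (hd : 0 < d) (h : d ≤ |t - a|) : bump d a t = 0 :=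
  relu_of_nonpos (by rwa [sub_nonpos, one_le_div hd])

lemma gate_one (M p : ℝ) : gate M p 1 = p := by simp [gate, relu_sub_relu_neg]

lemma gate_zero {M p : ℝ} (h : |p| ≤ M) : gate M p 0 = 0 := by
  obtain ⟨h₁, h₂⟩ := abs_le.1 h
  simp only [gate, relu_of_nonpos (by linarith : p + M * (0 - 1) ≤ 0),
    relu_of_nonpos (by linarith : -p + M * (0 - 1) ≤ 0), sub_self]

lemma bump_mem_reluClosure (d a : ℝ) : bump d a ∈ reluClosure (affineFns ℝ) := by
  have hlin : (fun t => 1 - |t - a| / d) = (fun _ => 1) - d⁻¹ • fun t => |1 * t + -a| := by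
    funext t
    simp only [Pi.sub_apply, Pi.smul_apply, smul_eq_mul, one_mul, ← sub_eq_add_neg]
    ring
  refine relu_comp_mem_reluClosure (f := fun t => 1 - |t - a| / d) ?_
  rw [hlin]
  exact sub_mem (const_mem_reluClosure_affineFns 1) (Submodule.smul_mem _ d⁻¹
    (abs_comp_mem_reluClosure (le_reluClosure (mul_add_mem_affineFns 1 (-a)))))

variable {E : Type*} [AddCommGroup E] [Module ℝ E]

lemma gate_comp_mem_reluClosure (M : ℝ) {P S : E → ℝ} (hP : P ∈ reluClosure (affineFns E))
    (hS : S ∈ reluClosure (affineFns E)) :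
    (fun u => gate M (P u) (S u)) ∈ reluClosure (affineFns E) := by
  have hS' : M • (S - fun _ => 1) ∈ reluClosure (affineFns E) :=
    Submodule.smul_mem _ M (sub_mem hS (const_mem_reluClosure_affineFns 1))
  exact sub_mem (relu_comp_mem_reluClosure (add_mem hP hS'))
    (relu_comp_mem_reluClosure (add_mem (neg_mem hP) hS'))

variable {K : ℕ} (i0 : Fin K) (x : Fin K → ℝ) (d M : ℝ) (p : Fin K → ℝ → ℝ)

noncomputable def hypernet (u : Fin (K + 1) → ℝ) : Fin 1 → ℝ :=
  fun _ => ∑ i, gate M (p i (u i0.succ)) (bump d (x i) (u 0))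

lemma isReLUNet_hypernet (hp : ∀ i, p i ∈ reluClosure (affineFns ℝ)) :
    IsReLUNet (hypernet i0 x d M p) := by
  refine isReLUNet_of_forall_mem_reluClosure fun _ => ?_
  simp only [hypernet, ← Finset.sum_fn]
  exact sum_mem fun i _ => gate_comp_mem_reluClosure M (comp_apply_mem_reluClosure (hp i) _)
    (comp_apply_mem_reluClosure (bump_mem_reluClosure d (x i)) 0)

lemma hypernet_cons (hd : 0 < d) (hx : ∀ i k, i ≠ k → d ≤ |x i - x k|)
    {z : Fin K → ℝ} (hM : ∀ i, |p i (z i0)| ≤ M) (k : Fin K) :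
    hypernet i0 x d M p (Fin.cons (x k) z) 0 = p k (z i0) := by
  simp only [hypernet, Fin.cons_zero, Fin.cons_succ]
  rw [Finset.sum_eq_single k (fun i _ hik => by rw [bump_eq_zero hd (hx k i hik.symm),
    gate_zero (hM i)]) (by simp), bump_self, gate_one]

end Hypernet

lemma Function.Injective.exists_pos_le_abs_sub {ι : Type*} [Finite ι] {x : ι → ℝ}
    (hx : x.Injective) : ∃ d > 0, ∀ i k, i ≠ k → d ≤ |x i - x k| := by
  have : ∀ᶠ d in 𝓝[>] (0 : ℝ), ∀ i k, i ≠ k → d ≤ |x i - x k| := by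
    refine eventually_all.2 fun i => eventually_all.2 fun k => ?_
    by_cases hik : i = k
    · exact Eventually.of_forall fun _ h => absurd hik h
    · exact ((eventually_le_nhds (abs_pos.2 (sub_ne_zero.2 (hx.ne hik)))).filter_mono
        nhdsWithin_le_nhds).mono fun _ h _ => h
  obtain ⟨d, hd, hpos⟩ := (this.and self_mem_nhdsWithin).exists
  exact ⟨d, hpos, hd⟩

lemma ae_norm_le_abs_of_measure_eq_one {ι : Type*} [Fintype ι] {μ : Measure (ι → ℝ)}
    [IsProbabilityMeasure μ] {B : ℝ} (hμ : μ {v | ∀ i, |v i| ≤ B} = 1) : ∀ᵐ v ∂μ, ‖v‖ ≤ |B| := by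
  have hμB : ∀ᵐ v ∂μ, ∀ i, |v i| ≤ B :=
    (ae_iff_measure_eq (by measurability)).2 (by rw [hμ, measure_univ])
  exact hμB.mono fun v hv =>
    (pi_norm_le_iff_of_nonneg (abs_nonneg B)).2 fun i => (hv i).trans (le_abs_self B)

instance : IsProbabilityMeasure (volume.restrict (Icc (0 : ℝ) 1)) := ⟨by simp⟩

lemma measurePreserving_projIcc :
    MeasurePreserving (projIcc (0 : ℝ) 1 zero_le_one) (volume.restrict (Icc 0 1)) volume := by
  refine ⟨continuous_projIcc.measurable, ?_⟩
  rw [← unitInterval.measurePreserving_coe.map_eq,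
    Measure.map_map continuous_projIcc.measurable measurable_subtype_coe]
  simp [Function.comp_def, projIcc_val]

lemma MeasureTheory.MeasurePreserving.one_sub_measure_compl_le {α β : Type*} [MeasurableSpace α]
    [MeasurableSpace β] {μ : Measure α} [IsProbabilityMeasure μ] {ν : Measure β} {T : α → β}
    (hT : MeasurePreserving T μ ν) {G : Set β} {S : Set α} (h : ∀ᵐ z ∂μ, T z ∈ G → z ∈ S) :
    1 - ν Gᶜ ≤ μ S := by
  have hcompl : μ Sᶜ ≤ ν Gᶜ :=
    calc μ Sᶜ ≤ μ (T ⁻¹' Gᶜ) := measure_mono_ae (h.mono fun _ hz hzS hzG => hzS (hz hzG))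
      _ ≤ μ.map T Gᶜ := Measure.le_map_apply hT.aemeasurable _
      _ = ν Gᶜ := by rw [hT.map_eq]
  have hunion : 1 ≤ μ S + μ Sᶜ :=
    calc 1 = μ (S ∪ Sᶜ) := by rw [union_compl_self, measure_univ]
      _ ≤ μ S + μ Sᶜ := measure_union_le _ _
  exact (tsub_le_tsub_left hcompl 1).trans (tsub_le_iff_right.2 hunion)

theorem relu_linear_hypermodel_universal_uniform_general
    (K : ℕ) (hK : 1 ≤ K) (x : Fin K → ℝ) (hx : Function.Injective x)
    (ε δ B : ℝ) (hε : 0 < ε) (hδ : δ ∈ Set.Ioo (0 : ℝ) 1)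
    (μ : Measure (Fin K → ℝ)) [IsProbabilityMeasure μ]
    (hμ : μ {v | ∀ i, |v i| ≤ B} = 1) :
    ∃ (H : (Fin K → ℝ) → (Fin K → ℝ)) (N : (Fin (K + 1) → ℝ) → (Fin 1 → ℝ)),
      Measurable H ∧
      Measure.map H (Measure.pi fun _ : Fin K => volume.restrict (Set.Icc (0 : ℝ) 1)) = μ ∧
      IsReLUNet N ∧
      ENNReal.ofReal (1 - δ) ≤
        (Measure.pi fun _ : Fin K => volume.restrict (Set.Icc (0 : ℝ) 1))
          {z | ∀ i, |N (Fin.cons (x i) z) 0 - H z i| ≤ ε} := by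
  set i0 : Fin K := ⟨0, hK⟩
  set T : (Fin K → ℝ) → I := fun z => projIcc 0 1 zero_le_one (z i0)
  have hT : MeasurePreserving T (Measure.pi fun _ => volume.restrict (Icc 0 1)) volume :=
    measurePreserving_projIcc.comp (measurePreserving_eval _ i0)
  obtain ⟨f, hf, hfμ⟩ := μ.exists_measurable_map_eq
  have hfint : Integrable f := Integrable.of_bound hf.aestronglyMeasurable |B|
    (ae_of_ae_map hf.aemeasurable (hfμ ▸ ae_norm_le_abs_of_measure_eq_one hμ))
  obtain ⟨p, hp, ⟨M, hM⟩, hbad⟩ :=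
    hfint.exists_reluClosure_measure_compl_le hε (ENNReal.ofReal_pos.2 hδ.1).ne'
  obtain ⟨d, hd, hsep⟩ := hx.exists_pos_le_abs_sub
  refine ⟨f ∘ T, hypernet i0 x d M p, hf.comp hT.measurable, ?_,
    isReLUNet_hypernet i0 x d M p hp, ?_⟩
  · rw [← Measure.map_map hf hT.measurable, hT.map_eq, hfμ]
  calc ENNReal.ofReal (1 - δ) = 1 - ENNReal.ofReal δ := by
        rw [ENNReal.ofReal_sub _ hδ.1.le, ENNReal.ofReal_one]
    _ ≤ 1 - volume {s : I | ∀ i, |p i s - f s i| < ε}ᶜ := tsub_le_tsub_left hbad 1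
    _ ≤ _ := hT.one_sub_measure_compl_le ?_
  filter_upwards [(measurePreserving_eval _ i0).quasiMeasurePreserving.ae
    (ae_restrict_mem measurableSet_Icc)] with z hz hzG i
  have hzT : (T z : ℝ) = z i0 := congrArg Subtype.val (projIcc_of_mem _ hz)
  rw [hypernet_cons i0 x d M p hd hsep (fun i => hzT ▸ hM i (T z)) i]
  exact (hzT ▸ hzG i).le

/-- With `p_z` the uniform probability measure on the cube `[0,1]^K`: for every `ε > 0`, `δ ∈ (0,1)`,
`B > 0` and Borel probability measure `μ` on `ℝ^K` supported on the sup-norm ball of radius `B`,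
there are a transport map `H` from `p_z` to `μ` and a ReLU network `N : ℝ^{1+K} → ℝ` such that
with `p_z`-probability at least `1 - δ` over `z`, `max_i |N(x_i, z) - H(z)_i| ≤ ε`. -/
theorem relu_linear_hypermodel_universal_uniform
    (K : ℕ) (hK : 1 ≤ K) (x : Fin K → ℝ) (hx : Function.Injective x)
    (ε δ B : ℝ) (hε : 0 < ε) (hδ : δ ∈ Set.Ioo (0 : ℝ) 1) (hB : 0 < B)
    (μ : Measure (Fin K → ℝ)) [IsProbabilityMeasure μ]
    (hμ : μ {v | ∀ i, |v i| ≤ B} = 1) :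
    ∃ (H : (Fin K → ℝ) → (Fin K → ℝ)) (N : (Fin (K + 1) → ℝ) → (Fin 1 → ℝ)),
      Measurable H ∧
      Measure.map H (Measure.pi fun _ : Fin K => volume.restrict (Set.Icc (0 : ℝ) 1)) = μ ∧
      IsReLUNet N ∧
      ENNReal.ofReal (1 - δ) ≤
        (Measure.pi fun _ : Fin K => volume.restrict (Set.Icc (0 : ℝ) 1))
          {z | ∀ i, |N (Fin.cons (x i) z) 0 - H z i| ≤ ε} :=
  relu_linear_hypermodel_universal_uniform_general K hK x hx ε δ B hε hδ μ hμ
end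

section
/- Let X be a finite nonempty set, let r : X → ℝ satisfy r(x) ≥ 0 for all x, and let v : X → ℝ satisfy v(x) > 0 for all x. Consider the function Ψ(π) = (∑_{x ∈ X} π_x r(x))² / (∑_{x ∈ X} π_x v(x)) defined on the simplex Δ_X = {π : X → ℝ : π_x ≥ 0 for all x, ∑_x π_x = 1}. Then there exists π* ∈ Δ_X attaining the minimum of Ψ over Δ_X such that π* has at most two nonzero components. -/
/-!
Let `π` minimise `Ψ` over the compact simplex, with `N = π ⬝ᵥ r` and `D = π ⬝ᵥ v`. Shifting mass
between two actions `x`, `y` of its support gives a one-parameter family with a local minimum at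
`0`, and the vanishing derivative says that `N² v - 2 N D r` is constant on the support of `π`.
Hence every distribution `σ` supported there with `σ ⬝ᵥ r = N` has `N² (σ ⬝ᵥ v) = N² D`, so
`Ψ σ = Ψ π`. Such a `σ` with at most two atoms mixes the actions of least and greatest `r` in the
support of `π`.
-/

open Finset Filter Topology

section

variable {X : Type*}

lemma mem_pair_of_mem_segment_single [DecidableEq X] {p q : X} {σ : X → ℝ}
    (hσ : σ ∈ segment ℝ (Pi.single p 1) (Pi.single q 1)) {x : X} (hx : σ x ≠ 0) :
    x = p ∨ x = q := by
  obtain ⟨a, b, -, -, -, rfl⟩ := hσ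
  by_contra! h
  simp [h.1, h.2] at hx

variable [Fintype X]

noncomputable def infoRatio (r v π : X → ℝ) : ℝ := (π ⬝ᵥ r) ^ 2 / (π ⬝ᵥ v)

lemma exists_ne_zero_of_mem_stdSimplex {π : X → ℝ} (hπ : π ∈ stdSimplex ℝ X) :
    ∃ x, π x ≠ 0 := by
  obtain ⟨x, -, hx⟩ := exists_ne_zero_of_sum_ne_zero (hπ.2.symm ▸ one_ne_zero : ∑ x, π x ≠ 0)
  exact ⟨x, hx⟩

lemma Convex.dotProduct_mem {s : Set ℝ} (hs : Convex ℝ s) {π r : X → ℝ}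
    (hπ : π ∈ stdSimplex ℝ X) (hr : ∀ x, π x ≠ 0 → r x ∈ s) : π ⬝ᵥ r ∈ s := by
  classical
  rw [dotProduct, ← sum_filter_of_ne fun x _ h => left_ne_zero_of_mul h]
  exact hs.sum_mem (fun x _ => hπ.1 x) (by rw [sum_filter_ne_zero, hπ.2])
    fun x hx => hr x (mem_filter.1 hx).2

lemma dotProduct_pos_of_mem_stdSimplex {π v : X → ℝ} (hπ : π ∈ stdSimplex ℝ X) (hv : ∀ x, 0 < v x) :
    0 < π ⬝ᵥ v :=
  (convex_Ioi 0).dotProduct_mem hπ fun x _ => hv x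

lemma exists_isMinOn_infoRatio [Nonempty X] (r : X → ℝ) {v : X → ℝ} (hv : ∀ x, 0 < v x) :
    ∃ π ∈ stdSimplex ℝ X, IsMinOn (infoRatio r v) (stdSimplex ℝ X) π := by
  classical
  have hcont (f : X → ℝ) : Continuous fun π : X → ℝ => π ⬝ᵥ f := by unfold dotProduct; fun_prop
  refine (isCompact_stdSimplex ℝ X).exists_isMinOn
    ⟨_, single_mem_stdSimplex ℝ (Classical.arbitrary X)⟩ ?_
  exact ((hcont r).pow 2).continuousOn.div (hcont v).continuousOn
    fun π hπ => (dotProduct_pos_of_mem_stdSimplex hπ hv).ne'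

lemma eventually_add_smul_single_sub_single_mem_stdSimplex [DecidableEq X] {π : X → ℝ}
    (hπ : π ∈ stdSimplex ℝ X) {x y : X} (hx : 0 < π x) (hy : 0 < π y) :
    ∀ᶠ t in 𝓝 (0 : ℝ), π + t • (Pi.single x 1 - Pi.single y 1) ∈ stdSimplex ℝ X := by
  filter_upwards [Icc_mem_nhds (neg_lt_zero.2 hx) hy] with t ⟨htx, hty⟩
  refine ⟨fun z => ?_, ?_⟩
  · simp only [Pi.add_apply, Pi.smul_apply, Pi.sub_apply, Pi.single_apply, smul_eq_mul]
    have := hπ.1 z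
    split_ifs with h1 h2 h2 <;> subst_vars <;> linarith
  · simp [sum_add_distrib, ← mul_sum, hπ.2]

lemma IsLocalMin.sq_mul_eq_of_sq_div {N D a b : ℝ} (hD : D ≠ 0)
    (h : IsLocalMin (fun t : ℝ => (N + t * a) ^ 2 / (D + t * b)) 0) :
    N ^ 2 * b = 2 * N * D * a := by
  have hnum := (((hasDerivAt_id (0 : ℝ)).mul_const a).const_add N).pow 2
  have hden := ((hasDerivAt_id (0 : ℝ)).mul_const b).const_add D
  have := h.hasDerivAt_eq_zero (hnum.div hden (by simpa using hD))
  norm_num at this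
  field_simp at this
  linear_combination -this.resolve_right hD

lemma IsMinOn.infoRatio_stationary {r v π : X → ℝ}
    (hmin : IsMinOn (infoRatio r v) (stdSimplex ℝ X) π) (hπ : π ∈ stdSimplex ℝ X)
    (hv : ∀ x, 0 < v x) {x y : X} (hx : π x ≠ 0) (hy : π y ≠ 0) :
    (π ⬝ᵥ r) ^ 2 * v x - 2 * (π ⬝ᵥ r) * (π ⬝ᵥ v) * r x
      = (π ⬝ᵥ r) ^ 2 * v y - 2 * (π ⬝ᵥ r) * (π ⬝ᵥ v) * r y := by
  classical
  have hlocal : IsLocalMin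
      (fun t : ℝ => (π ⬝ᵥ r + t * (r x - r y)) ^ 2 / (π ⬝ᵥ v + t * (v x - v y))) 0 := by
    filter_upwards [eventually_add_smul_single_sub_single_mem_stdSimplex hπ
      ((hπ.1 x).lt_of_ne' hx) ((hπ.1 y).lt_of_ne' hy)] with t ht
    simpa [infoRatio, add_dotProduct, smul_dotProduct] using hmin ht
  linear_combination hlocal.sq_mul_eq_of_sq_div (dotProduct_pos_of_mem_stdSimplex hπ hv).ne'

lemma exists_ncard_support_le_two_dotProduct_eq {π : X → ℝ} (hπ : π ∈ stdSimplex ℝ X)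
    (r : X → ℝ) :
    ∃ σ ∈ stdSimplex ℝ X, (∀ x, σ x ≠ 0 → π x ≠ 0) ∧ {x | σ x ≠ 0}.ncard ≤ 2 ∧
      σ ⬝ᵥ r = π ⬝ᵥ r := by
  classical
  obtain ⟨x₀, hx₀⟩ := exists_ne_zero_of_mem_stdSimplex hπ
  have hS : (univ.filter fun x => π x ≠ 0).Nonempty := ⟨x₀, by simpa using hx₀⟩
  obtain ⟨p, hp, hpmin⟩ := exists_min_image _ r hS
  obtain ⟨q, hq, hqmax⟩ := exists_max_image _ r hS
  have hmem : π ⬝ᵥ r ∈ Set.Icc (r p) (r q) := (convex_Icc _ _).dotProduct_mem hπ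
    fun x hx => ⟨hpmin x (by simpa using hx), hqmax x (by simpa using hx)⟩
  obtain ⟨a, b, ha, hb, hab, hr⟩ := Icc_subset_segment hmem
  have hseg : a • Pi.single p 1 + b • Pi.single q 1 ∈
      segment ℝ (Pi.single p (1 : ℝ)) (Pi.single q 1) :=
    ⟨a, b, ha, hb, hab, rfl⟩
  refine ⟨_, segment_single_subset_stdSimplex ℝ p q hseg, fun x hx => ?_, ?_, ?_⟩
  · rcases mem_pair_of_mem_segment_single hseg hx with rfl | rfl
    · simpa using hp
    · simpa using hq
  · calc {x | _ ≠ 0}.ncard ≤ ({p, q} : Set X).ncard :=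
          Set.ncard_le_ncard (fun x hx => mem_pair_of_mem_segment_single hseg hx) (Set.toFinite _)
      _ ≤ 2 := (Set.ncard_insert_le p {q}).trans (by simp)
  · simpa [add_dotProduct, smul_dotProduct, single_dotProduct] using hr

end

theorem ids_min_attained_two_support_general {X : Type*} [Fintype X] [Nonempty X]
    (r v : X → ℝ) (hv : ∀ x, 0 < v x) :
    ∃ π₀ ∈ stdSimplex ℝ X,
      (∀ π ∈ stdSimplex ℝ X,
        (∑ x, π₀ x * r x) ^ 2 / (∑ x, π₀ x * v x)
          ≤ (∑ x, π x * r x) ^ 2 / (∑ x, π x * v x)) ∧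
      Set.ncard {x | π₀ x ≠ 0} ≤ 2 := by
  obtain ⟨π, hπ, hmin⟩ := exists_isMinOn_infoRatio r hv
  obtain ⟨σ, hσ, hσπ, hcard, hσr⟩ := exists_ncard_support_le_two_dotProduct_eq hπ r
  obtain ⟨x₀, hx₀⟩ := exists_ne_zero_of_mem_stdSimplex hπ
  set N := π ⬝ᵥ r
  set D := π ⬝ᵥ v
  set g : X → ℝ := N ^ 2 • v - (2 * N * D) • r
  have hg : ∀ x, π x ≠ 0 → g x ∈ ({g x₀} : Set ℝ) := fun x hx =>
    hmin.infoRatio_stationary hπ hv hx hx₀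
  have hπg := (convex_singleton (g x₀)).dotProduct_mem hπ hg
  have hσg := (convex_singleton (g x₀)).dotProduct_mem hσ fun x hx => hg x (hσπ x hx)
  simp only [g, Set.mem_singleton_iff, dotProduct_sub, dotProduct_smul, smul_eq_mul, hσr]
    at hπg hσg
  have hratio : infoRatio r v σ = infoRatio r v π := by
    rw [infoRatio, infoRatio, hσr, div_eq_div_iff (dotProduct_pos_of_mem_stdSimplex hσ hv).ne'
      (dotProduct_pos_of_mem_stdSimplex hπ hv).ne']
    linear_combination hπg - hσg
  exact ⟨σ, hσ, fun τ hτ => (hratio.trans_le (hmin hτ) : infoRatio r v σ ≤ infoRatio r v τ),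
    hcard⟩

/-- The variance-IDS information ratio `π ↦ (∑_x π_x r_x)² / (∑_x π_x v_x)` (with `r ≥ 0`
and `v > 0`) attains its minimum over the simplex at a distribution with at most two nonzero
components. -/
theorem ids_min_attained_two_support {X : Type*} [Fintype X] [Nonempty X]
    (r v : X → ℝ) (hr : ∀ x, 0 ≤ r x) (hv : ∀ x, 0 < v x) :
    ∃ π₀ ∈ stdSimplex ℝ X,
      (∀ π ∈ stdSimplex ℝ X,
        (∑ x, π₀ x * r x) ^ 2 / (∑ x, π₀ x * v x)
          ≤ (∑ x, π x * r x) ^ 2 / (∑ x, π x * v x)) ∧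
      Set.ncard {x | π₀ x ≠ 0} ≤ 2 :=
  ids_min_attained_two_support_general r v hv
end
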